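/- For the 3-dimensional Lie algebra example L = L(a₁,a₂), the fundamental tensor F(x,y,z) = g(∇ₓ(φy) − φ(∇ₓy), z) is given explicitly by F(x,y,z) = −a₂[x¹(y⁰z¹ + y¹z⁰) + x²(y⁰z² + y²z⁰)] − a₁[x¹(y⁰z² + y²z⁰) − x²(y⁰z¹ + y¹z⁰)] for all x = x⁰E₀ + x¹E₁ + x²E₂, y = y⁰E₀ + y¹E₁ + y²E₂, z = z⁰E₀ + z¹E₁ + z²E₂ in L. -/

import Mathlib

open scoped RealInnerProductSpace

noncomputable section

/-- The 3-dimensional Euclidean space underlying the Lie algebra `L(a₁,a₂)`. -/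
abbrev E3 : Type := EuclideanSpace ℝ (Fin 3)

/-- The orthonormal basis vectors `E₀`, `E₁`, `E₂`. -/
def eL (i : Fin 3) : E3 := EuclideanSpace.single i 1

/-- The Lie bracket of `L(a₁,a₂)`:
`[E₀,E₁] = -a₁E₁ - a₂E₂`, `[E₀,E₂] = -a₂E₁ + a₁E₂`, `[E₁,E₂] = 0`. -/
def lieB (a₁ a₂ : ℝ) (x y : E3) : E3 :=
  (x 0 * y 1 - x 1 * y 0) • ((-a₁) • eL 1 + (-a₂) • eL 2)
    + (x 0 * y 2 - x 2 * y 0) • ((-a₂) • eL 1 + a₁ • eL 2)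

/-- The endomorphism `φ`: `φE₀ = 0`, `φE₁ = E₂`, `φE₂ = E₁`. -/
def phiL (x : E3) : E3 := x 2 • eL 1 + x 1 • eL 2

/-- The Reeb vector `ξ = E₀`. -/
def xiL : E3 := eL 0

/-- The 1-form `η`. -/
def etaL (x : E3) : ℝ := x 0

/-- The fundamental tensor `F(x,y,z) = g(∇ₓ(φy) - φ(∇ₓy), z)`. -/
def FL (nabla : E3 → E3 → E3) (x y z : E3) : ℝ :=
  ⟪nabla x (phiL y) - phiL (nabla x y), z⟫

/-! Since `φ` is `g`-symmetric, `F(x,y,z) = g(∇ₓ(φy), z) - g(∇ₓy, φz)`, and the Koszul formula,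
applied to `(x, φy, z)` and to `(x, y, φz)`, evaluates both terms in coordinates. -/

lemma inner_eq_sum_three (u v : EuclideanSpace ℝ (Fin 3)) :
    ⟪u, v⟫ = u 0 * v 0 + u 1 * v 1 + u 2 * v 2 := by
  simp only [PiLp.inner_apply, Fin.sum_univ_three, RCLike.inner_apply, conj_trivial]
  ring

section Components

variable (a₁ a₂ : ℝ) (x y : E3)

lemma phiL_apply_zero : phiL x 0 = 0 := by
  simp [phiL, eL]

lemma phiL_apply_one : phiL x 1 = x 2 := by
  simp [phiL, eL]

lemma phiL_apply_two : phiL x 2 = x 1 := by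
  simp [phiL, eL]

lemma lieB_apply_zero : lieB a₁ a₂ x y 0 = 0 := by
  simp [lieB, eL]

lemma lieB_apply_one :
    lieB a₁ a₂ x y 1 = -a₁ * (x 0 * y 1 - x 1 * y 0) - a₂ * (x 0 * y 2 - x 2 * y 0) := by
  simp [lieB, eL]
  ring

lemma lieB_apply_two :
    lieB a₁ a₂ x y 2 = -a₂ * (x 0 * y 1 - x 1 * y 0) + a₁ * (x 0 * y 2 - x 2 * y 0) := by
  simp [lieB, eL]
  ring

end Components

lemma inner_phiL_left (u v : E3) : ⟪phiL u, v⟫ = ⟪u, phiL v⟫ := by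
  simp only [inner_eq_sum_three, phiL_apply_zero, phiL_apply_one, phiL_apply_two]
  ring

lemma FL_eq_sub_inner (nabla : E3 → E3 → E3) (x y z : E3) :
    FL nabla x y z = ⟪nabla x (phiL y), z⟫ - ⟪nabla x y, phiL z⟫ := by
  rw [FL, inner_sub_left, inner_phiL_left]

lemma inner_lieB (a₁ a₂ : ℝ) (u v w : E3) :
    ⟪lieB a₁ a₂ u v, w⟫ =
      (u 0 * v 1 - u 1 * v 0) * (-a₁ * w 1 - a₂ * w 2)
        + (u 0 * v 2 - u 2 * v 0) * (-a₂ * w 1 + a₁ * w 2) := by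
  simp only [inner_eq_sum_three, lieB_apply_zero, lieB_apply_one, lieB_apply_two]
  ring

/-- explicit form of the fundamental tensor of `L(a₁,a₂)`. -/
theorem statement17 (a₁ a₂ : ℝ) (nabla : E3 → E3 → E3)
    (hK : ∀ x y z : E3, 2 * ⟪nabla x y, z⟫ =
      ⟪lieB a₁ a₂ x y, z⟫ + ⟪lieB a₁ a₂ z x, y⟫ + ⟪lieB a₁ a₂ z y, x⟫) :
    ∀ x y z : E3, FL nabla x y z =
      -a₂ * (x 1 * (y 0 * z 1 + y 1 * z 0) + x 2 * (y 0 * z 2 + y 2 * z 0))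
      - a₁ * (x 1 * (y 0 * z 2 + y 2 * z 0) - x 2 * (y 0 * z 1 + y 1 * z 0)) := by
  intro x y z
  have hKφy := hK x (phiL y) z
  have hKφz := hK x y (phiL z)
  simp only [inner_lieB, phiL_apply_zero, phiL_apply_one, phiL_apply_two] at hKφy hKφz
  rw [FL_eq_sub_inner]
  linear_combination hKφy / 2 - hKφz / 2
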